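/- arXiv:1205.6248 — 3 statements merged into one kernel-verified Lean document; each statement's English description precedes it below -/
import Mathlib

section
/- Under the Lancaster construction f(x,y) = f₁(x) f₂(y) (1 + Σₙ ρₙ φₙ(x) ψₙ(y)) with Σₙ |ρₙ| cₙ dₙ ≤ 1, the function f is a probability density on ℝ², i.e. f ≥ 0 and ∬ f(x,y) dx dy = 1. -/
/-!
On the rectangle `[α₁, ω₁] × [α₂, ω₂]` each term of the series is bounded by `|ρₙ| cₙ dₙ`, so the
series has absolute value at most `1` and `f ≥ 0`; outside the rectangle `f₁(x) f₂(y) = 0`.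
For the mass, `f` is the sum of the products `(ρₙ φₙ f₁)(x) (ψₙ f₂)(y)`, with the zeroth term
`f₁(x) f₂(y)`. The `L¹` norms of these products are at most `|ρₙ| cₙ dₙ`, so the series may be
integrated term by term, and by Fubini every term with `n ≥ 1` integrates to
`ρₙ (∫ φₙ f₁) (∫ ψₙ f₂) = 0`, because `ψₙ` is orthogonal to the nonzero constant `ψ₀`.
-/

open MeasureTheory ProbabilityTheory Real
open scoped ENNReal

noncomputable def covar {Ω : Type*} [MeasurableSpace Ω] (μ : Measure Ω) (X Y : Ω → ℝ) : ℝ :=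
  ∫ ω, (X ω - ∫ a, X a ∂μ) * (Y ω - ∫ a, Y a ∂μ) ∂μ

noncomputable def pearson {Ω : Type*} [MeasurableSpace Ω] (μ : Measure Ω) (X Y : Ω → ℝ) : ℝ :=
  covar μ X Y / (Real.sqrt (variance X μ) * Real.sqrt (variance Y μ))

noncomputable def maxCorr {Ω : Type*} [MeasurableSpace Ω] (μ : Measure Ω) (X Y : Ω → ℝ) : ℝ :=
  sSup { r : ℝ | ∃ g₁ g₂ : ℝ → ℝ, Measurable g₁ ∧ Measurable g₂ ∧
    MemLp (g₁ ∘ X) 2 μ ∧ MemLp (g₂ ∘ Y) 2 μ ∧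
    0 < variance (g₁ ∘ X) μ ∧ 0 < variance (g₂ ∘ Y) μ ∧
    r = pearson μ (g₁ ∘ X) (g₂ ∘ Y) }

/-- `g` is a probability density on `ℝ` supported in `[a, b]`. -/
def IsDensityOn (g : ℝ → ℝ) (a b : ℝ) : Prop :=
  (∀ x, 0 ≤ g x) ∧ (∀ x, x ∉ Set.Icc a b → g x = 0) ∧ (∫ x, g x = 1)

/-- `φ` is the orthonormal polynomial system of the density `g`:
degree `n`, positive leading coefficients, orthonormal in `L²(g dx)`. -/
def OrthonormalPolys (g : ℝ → ℝ) (φ : ℕ → Polynomial ℝ) : Prop :=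
  (∀ n, (φ n).natDegree = n) ∧ (∀ n, 0 < (φ n).leadingCoeff) ∧
  (∀ m n, ∫ x, (φ m).eval x * (φ n).eval x * g x = if m = n then 1 else 0)

/-- The Lancaster density `f(x,y) = f₁(x) f₂(y) (1 + Σₙ≥₁ ρₙ φₙ(x) ψₙ(y))`. -/
noncomputable def lancaster (f₁ f₂ : ℝ → ℝ) (φ ψ : ℕ → Polynomial ℝ) (ρ : ℕ → ℝ)
    (x y : ℝ) : ℝ :=
  f₁ x * f₂ y * (1 + ∑' n : ℕ, ρ (n + 1) * (φ (n + 1)).eval x * (ψ (n + 1)).eval y)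

open Polynomial Set

noncomputable def supNormOn (p : ℝ[X]) (s : Set ℝ) : ℝ :=
  sSup ((fun x => |p.eval x|) '' s)

lemma abs_eval_le_supNormOn {s : Set ℝ} (hs : IsCompact s) (p : ℝ[X]) {x : ℝ} (hx : x ∈ s) :
    |p.eval x| ≤ supNormOn p s :=
  le_csSup (hs.image p.continuous.abs).bddAbove ⟨x, hx, rfl⟩

lemma supNormOn_nonneg (p : ℝ[X]) (s : Set ℝ) : 0 ≤ supNormOn p s :=
  Real.sSup_nonneg (by rintro _ ⟨x, -, rfl⟩; exact abs_nonneg _)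

lemma abs_mul_eval_mul_eval_le {s t : Set ℝ} (hs : IsCompact s) (ht : IsCompact t) (r : ℝ)
    (p q : ℝ[X]) {x y : ℝ} (hx : x ∈ s) (hy : y ∈ t) :
    |r * p.eval x * q.eval y| ≤ |r| * supNormOn p s * supNormOn q t := by
  rw [abs_mul, abs_mul]
  exact mul_le_mul
    (mul_le_mul_of_nonneg_left (abs_eval_le_supNormOn hs p hx) (abs_nonneg r))
    (abs_eval_le_supNormOn ht q hy) (abs_nonneg _)
    (mul_nonneg (abs_nonneg r) (supNormOn_nonneg p s))

theorem integral_tsum_prod_mul {α β 𝕜 : Type*} [RCLike 𝕜] [MeasurableSpace α] [MeasurableSpace β]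
    {μ : Measure α} {ν : Measure β} [SFinite μ] [SFinite ν] {u : ℕ → α → 𝕜} {v : ℕ → β → 𝕜}
    (hu : ∀ n, Integrable (u n) μ) (hv : ∀ n, Integrable (v n) ν)
    (hs : Summable fun n => (∫ x, ‖u n x‖ ∂μ) * ∫ y, ‖v n y‖ ∂ν) :
    ∫ p, ∑' n, u n p.1 * v n p.2 ∂μ.prod ν = ∑' n, (∫ x, u n x ∂μ) * ∫ y, v n y ∂ν := by
  rw [← integral_tsum_of_summable_integral_norm fun n => (hu n).mul_prod (hv n)]
  · simp only [integral_prod_mul]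
  · refine hs.congr fun n => ?_
    rw [← integral_prod_mul]
    simp only [norm_mul]

namespace IsDensityOn

variable {g : ℝ → ℝ} {a b : ℝ}

lemma integrable (hg : IsDensityOn g a b) : Integrable g :=
  Integrable.of_integral_ne_zero (by rw [hg.2.2]; exact one_ne_zero)

lemma abs_eval_mul_le (hg : IsDensityOn g a b) (p : ℝ[X]) (x : ℝ) :
    |p.eval x * g x| ≤ supNormOn p (Icc a b) * g x := by
  by_cases hx : x ∈ Icc a b
  · rw [abs_mul, abs_of_nonneg (hg.1 x)]
    exact mul_le_mul_of_nonneg_right (abs_eval_le_supNormOn isCompact_Icc p hx) (hg.1 x)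
  · simp [hg.2.1 x hx]

lemma integrable_eval_mul (hg : IsDensityOn g a b) (p : ℝ[X]) :
    Integrable fun x => p.eval x * g x :=
  (hg.integrable.const_mul (supNormOn p (Icc a b))).mono'
    (p.continuous.aestronglyMeasurable.mul hg.integrable.1)
    (.of_forall fun x => (Real.norm_eq_abs _).trans_le (hg.abs_eval_mul_le p x))

lemma integral_abs_eval_mul_le (hg : IsDensityOn g a b) (p : ℝ[X]) :
    ∫ x, |p.eval x * g x| ≤ supNormOn p (Icc a b) :=
  calc ∫ x, |p.eval x * g x|
      ≤ ∫ x, supNormOn p (Icc a b) * g x :=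
        integral_mono (hg.integrable_eval_mul p).abs (hg.integrable.const_mul _)
          (hg.abs_eval_mul_le p)
    _ = supNormOn p (Icc a b) := by rw [integral_const_mul, hg.2.2, mul_one]

end IsDensityOn

lemma OrthonormalPolys.integral_eval_mul_eq_zero {g : ℝ → ℝ} {φ : ℕ → ℝ[X]}
    (hφ : OrthonormalPolys g φ) {n : ℕ} (hn : n ≠ 0) :
    ∫ x, (φ n).eval x * g x = 0 := by
  obtain ⟨hdeg, hlead, horth⟩ := hφ
  have hconst : φ 0 = C (φ 0).leadingCoeff := by
    rw [leadingCoeff, hdeg 0]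
    exact eq_C_of_natDegree_eq_zero (hdeg 0)
  have h := horth 0 n
  rw [if_neg hn.symm, hconst] at h
  simp only [eval_C, mul_assoc, integral_const_mul] at h
  exact (mul_eq_zero.mp h).resolve_left (hlead 0).ne'

noncomputable def lancasterFactor (g : ℝ → ℝ) (φ : ℕ → ℝ[X]) (r : ℕ → ℝ) : ℕ → ℝ → ℝ
  | 0 => g
  | n + 1 => fun x => r (n + 1) * ((φ (n + 1)).eval x * g x)

section Lancaster

variable {α₁ ω₁ α₂ ω₂ : ℝ} {f₁ f₂ : ℝ → ℝ} {φ ψ : ℕ → ℝ[X]} {ρ : ℕ → ℝ}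

lemma IsDensityOn.integrable_lancasterFactor {g : ℝ → ℝ} {a b : ℝ} (hg : IsDensityOn g a b)
    (r : ℕ → ℝ) : ∀ n, Integrable (lancasterFactor g φ r n)
  | 0 => hg.integrable
  | n + 1 => (hg.integrable_eval_mul (φ (n + 1))).const_mul (r (n + 1))

lemma IsDensityOn.integral_norm_lancasterFactor_le {g : ℝ → ℝ} {a b : ℝ}
    (hg : IsDensityOn g a b) (r : ℕ → ℝ) (n : ℕ) :
    ∫ x, ‖lancasterFactor g φ r (n + 1) x‖ ≤ |r (n + 1)| * supNormOn (φ (n + 1)) (Icc a b) := by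
  simp only [lancasterFactor, Real.norm_eq_abs, abs_mul (r (n + 1)), integral_const_mul]
  exact mul_le_mul_of_nonneg_left (hg.integral_abs_eval_mul_le _) (abs_nonneg _)

lemma lancaster_eq_tsum (hf₁ : IsDensityOn f₁ α₁ ω₁) (hf₂ : IsDensityOn f₂ α₂ ω₂)
    (hsum : Summable fun n : ℕ =>
      |ρ (n + 1)| * supNormOn (φ (n + 1)) (Icc α₁ ω₁) * supNormOn (ψ (n + 1)) (Icc α₂ ω₂))
    (x y : ℝ) :
    lancaster f₁ f₂ φ ψ ρ x y =
      ∑' n, lancasterFactor f₁ φ ρ n x * lancasterFactor f₂ ψ 1 n y := by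
  by_cases hxy : x ∈ Icc α₁ ω₁ ∧ y ∈ Icc α₂ ω₂
  · set F := fun n => lancasterFactor f₁ φ ρ n x * lancasterFactor f₂ ψ 1 n y
    have hterms : Summable fun n => F (n + 1) := by
      refine ((hsum.mul_left (f₁ x * f₂ y)).of_norm_bounded fun n => ?_)
      have := abs_mul_eval_mul_eval_le isCompact_Icc isCompact_Icc (ρ (n + 1)) (φ (n + 1))
        (ψ (n + 1)) hxy.1 hxy.2
      calc ‖F (n + 1)‖
          = f₁ x * f₂ y * |ρ (n + 1) * (φ (n + 1)).eval x * (ψ (n + 1)).eval y| := by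
            simp only [F, lancasterFactor, Real.norm_eq_abs, Pi.one_apply, abs_mul,
              abs_of_nonneg (hf₁.1 x), abs_of_nonneg (hf₂.1 y)]
            ring
        _ ≤ _ := mul_le_mul_of_nonneg_left this (mul_nonneg (hf₁.1 x) (hf₂.1 y))
    rw [((summable_nat_add_iff 1).mp hterms).tsum_eq_zero_add, lancaster, mul_add, mul_one,
      ← tsum_mul_left]
    congr 1
    refine tsum_congr fun n => ?_
    simp only [F, lancasterFactor, Pi.one_apply]
    ring
  · have hzero : f₁ x * f₂ y = 0 := by
      rcases not_and_or.mp hxy with hx | hy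
      · rw [hf₁.2.1 x hx, zero_mul]
      · rw [hf₂.2.1 y hy, mul_zero]
    have hterm : ∀ n, lancasterFactor f₁ φ ρ n x * lancasterFactor f₂ ψ 1 n y = 0 := by
      rintro (_ | n)
      · exact hzero
      · simp only [lancasterFactor, Pi.one_apply]
        linear_combination (ρ (n + 1) * (φ (n + 1)).eval x * (ψ (n + 1)).eval y) * hzero
    rw [lancaster, hzero, zero_mul, tsum_congr hterm, tsum_zero]

lemma lancaster_nonneg (hf₁ : IsDensityOn f₁ α₁ ω₁) (hf₂ : IsDensityOn f₂ α₂ ω₂)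
    (hsum : Summable fun n : ℕ =>
      |ρ (n + 1)| * supNormOn (φ (n + 1)) (Icc α₁ ω₁) * supNormOn (ψ (n + 1)) (Icc α₂ ω₂))
    (hρ : ∑' n : ℕ,
      |ρ (n + 1)| * supNormOn (φ (n + 1)) (Icc α₁ ω₁) * supNormOn (ψ (n + 1)) (Icc α₂ ω₂) ≤ 1)
    (x y : ℝ) : 0 ≤ lancaster f₁ f₂ φ ψ ρ x y := by
  by_cases hxy : x ∈ Icc α₁ ω₁ ∧ y ∈ Icc α₂ ω₂
  · have hseries : ‖∑' n : ℕ, ρ (n + 1) * (φ (n + 1)).eval x * (ψ (n + 1)).eval y‖ ≤ 1 :=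
      (tsum_of_norm_bounded hsum.hasSum fun n => abs_mul_eval_mul_eval_le isCompact_Icc
        isCompact_Icc _ _ _ hxy.1 hxy.2).trans hρ
    have hfactor := (abs_le.mp ((Real.norm_eq_abs _).symm.trans_le hseries)).1
    exact mul_nonneg (mul_nonneg (hf₁.1 x) (hf₂.1 y)) (by linarith)
  · rcases not_and_or.mp hxy with hx | hy
    · simp [lancaster, hf₁.2.1 x hx]
    · simp [lancaster, hf₂.2.1 y hy]

lemma integral_lancaster (hf₁ : IsDensityOn f₁ α₁ ω₁) (hf₂ : IsDensityOn f₂ α₂ ω₂)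
    (hψ : OrthonormalPolys f₂ ψ)
    (hsum : Summable fun n : ℕ =>
      |ρ (n + 1)| * supNormOn (φ (n + 1)) (Icc α₁ ω₁) * supNormOn (ψ (n + 1)) (Icc α₂ ω₂)) :
    ∫ p : ℝ × ℝ, lancaster f₁ f₂ φ ψ ρ p.1 p.2 = 1 := by
  have hnorms : Summable fun n => (∫ x, ‖lancasterFactor f₁ φ ρ n x‖) *
      ∫ y, ‖lancasterFactor f₂ ψ 1 n y‖ := by
    refine (summable_nat_add_iff 1).mp (hsum.of_nonneg_of_le
      (fun n => by positivity) fun n => ?_)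
    have hright := hf₂.integral_norm_lancasterFactor_le (φ := ψ) 1 n
    rw [Pi.one_apply, abs_one, one_mul] at hright
    exact mul_le_mul (hf₁.integral_norm_lancasterFactor_le ρ n) hright (by positivity)
      (mul_nonneg (abs_nonneg _) (supNormOn_nonneg _ _))
  have hfactor : ∀ n ≠ 0, ∫ y, lancasterFactor f₂ ψ 1 n y = 0 := by
    rintro (_ | n) hn
    · exact absurd rfl hn
    · simp only [lancasterFactor, integral_const_mul,
        hψ.integral_eval_mul_eq_zero n.succ_ne_zero, mul_zero]
  simp only [lancaster_eq_tsum hf₁ hf₂ hsum]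
  rw [Measure.volume_eq_prod, integral_tsum_prod_mul (hf₁.integrable_lancasterFactor ρ)
    (hf₂.integrable_lancasterFactor 1) hnorms,
    tsum_eq_single 0 fun n hn => by rw [hfactor n hn, mul_zero]]
  simp only [lancasterFactor, hf₁.2.2, hf₂.2.2, mul_one]

end Lancaster

theorem stmt4_general (α₁ ω₁ α₂ ω₂ : ℝ)
    (f₁ f₂ : ℝ → ℝ) (hf₁ : IsDensityOn f₁ α₁ ω₁) (hf₂ : IsDensityOn f₂ α₂ ω₂)
    (φ ψ : ℕ → Polynomial ℝ)
    (hψ : OrthonormalPolys f₂ ψ)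
    (c d : ℕ → ℝ)
    (hc : ∀ n, c n = sSup ((fun x => |(φ n).eval x|) '' Set.Icc α₁ ω₁))
    (hd : ∀ n, d n = sSup ((fun y => |(ψ n).eval y|) '' Set.Icc α₂ ω₂))
    (ρ : ℕ → ℝ)
    (hsum : Summable fun n : ℕ => |ρ (n + 1)| * c (n + 1) * d (n + 1))
    (hρ : ∑' n : ℕ, |ρ (n + 1)| * c (n + 1) * d (n + 1) ≤ 1) :
    (∀ x y : ℝ, 0 ≤ lancaster f₁ f₂ φ ψ ρ x y) ∧
    (∫ p : ℝ × ℝ, lancaster f₁ f₂ φ ψ ρ p.1 p.2 = 1) := by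
  obtain rfl : c = fun n => supNormOn (φ n) (Icc α₁ ω₁) := funext hc
  obtain rfl : d = fun n => supNormOn (ψ n) (Icc α₂ ω₂) := funext hd
  exact ⟨lancaster_nonneg hf₁ hf₂ hsum hρ, integral_lancaster hf₁ hf₂ hψ hsum⟩

/-- The Lancaster function is a probability density on `ℝ²`:
it is nonnegative and its double integral equals 1. -/
theorem stmt4 (α₁ ω₁ α₂ ω₂ : ℝ) (h₁ : α₁ < ω₁) (h₂ : α₂ < ω₂)
    (f₁ f₂ : ℝ → ℝ) (hf₁ : IsDensityOn f₁ α₁ ω₁) (hf₂ : IsDensityOn f₂ α₂ ω₂)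
    (hm₁ : Measurable f₁) (hm₂ : Measurable f₂)
    (φ ψ : ℕ → Polynomial ℝ)
    (hφ : OrthonormalPolys f₁ φ) (hψ : OrthonormalPolys f₂ ψ)
    (c d : ℕ → ℝ)
    (hc : ∀ n, c n = sSup ((fun x => |(φ n).eval x|) '' Set.Icc α₁ ω₁))
    (hd : ∀ n, d n = sSup ((fun y => |(ψ n).eval y|) '' Set.Icc α₂ ω₂))
    (ρ : ℕ → ℝ)
    (hsum : Summable fun n : ℕ => |ρ (n + 1)| * c (n + 1) * d (n + 1))
    (hρ : ∑' n : ℕ, |ρ (n + 1)| * c (n + 1) * d (n + 1) ≤ 1) :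
    (∀ x y : ℝ, 0 ≤ lancaster f₁ f₂ φ ψ ρ x y) ∧
    (∫ p : ℝ × ℝ, lancaster f₁ f₂ φ ψ ρ p.1 p.2 = 1) :=
  stmt4_general α₁ ω₁ α₂ ω₂ f₁ f₂ hf₁ hf₂ φ ψ hψ c d hc hd ρ hsum hρ
end

section
/- Let (X,Y) have the Lancaster density with E(φₙ(X)|Y) = ρₙ ψₙ(Y) a.s. and E(ψₙ(Y)|X) = ρₙ φₙ(X) a.s. for all n ≥ 1. Then for every n ≥ 1, E(Xⁿ | Y) = (ρₙ qₙ / pₙ) Yⁿ + P_{n−1}(Y) a.s. and E(Yⁿ | X) = (ρₙ pₙ / qₙ) Xⁿ + Q_{n−1}(X) a.s., where P_{n−1} and Q_{n−1} are polynomials of degree at most n − 1. -/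
open MeasureTheory ProbabilityTheory Real
open scoped ENNReal

/-!
Since `φₙ` has degree `n`, every polynomial `p` of degree `≤ n` is `(coeff_n p / pₙ) φₙ` plus a
polynomial of degree `< n`. Induction on `n` then shows that conditioning on `Y` maps polynomials in
`X` of degree `< n` to polynomials in `Y` of degree `< n`, and for `p = Xⁿ` the leading term of
`ρₙ ψₙ(Y) / pₙ` is `ρₙ qₙ / pₙ · Yⁿ`. Integrability of all polynomials in `X` and `Y` comes from the
bounded supports of the marginal densities.
-/

open Polynomial

theorem Polynomial.degree_sub_C_mul_lt {K : Type*} [Field K] {p b : K[X]} {n : ℕ}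
    (hp : p.degree ≤ n) (hb : b.natDegree = n) (hb₀ : b.leadingCoeff ≠ 0) :
    (p - C (p.coeff n / b.leadingCoeff) * b).degree < n := by
  rw [degree_lt_iff_coeff_zero]
  intro k hk
  rcases hk.eq_or_lt with rfl | hk
  · rw [coeff_sub, coeff_C_mul, ← hb, coeff_natDegree, hb, div_mul_cancel₀ _ hb₀, sub_self]
  · have hbk : b.degree < k :=
      (degree_le_natDegree.trans (by rw [hb])).trans_lt (by exact_mod_cast hk)
    rw [coeff_sub, coeff_C_mul, coeff_eq_zero_of_degree_lt (hp.trans_lt (by exact_mod_cast hk)),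
      coeff_eq_zero_of_degree_lt hbk, mul_zero, sub_zero]

section Support

variable {Ω α : Type*} [MeasurableSpace Ω] [MeasurableSpace α] {μ : Measure Ω}

lemma ae_mem_of_map_eq_withDensity {Z : Ω → α} (hZ : AEMeasurable Z μ) {ν : Measure α}
    {g : α → ℝ≥0∞} (hmap : μ.map Z = ν.withDensity g) {s : Set α} (hs : MeasurableSet s)
    (hg : ∀ x ∉ s, g x = 0) : ∀ᵐ ω ∂μ, Z ω ∈ s := by
  refine ae_of_ae_map hZ ?_
  rw [hmap, ae_iff, ← Set.compl_def, withDensity_apply _ hs.compl,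
    setLIntegral_congr_fun hs.compl hg, lintegral_zero]

lemma integrable_comp_of_ae_mem_isCompact [IsFiniteMeasure μ] {X : Ω → ℝ}
    (hX : AEMeasurable X μ) {f : ℝ → ℝ} (hf : Continuous f) {K : Set ℝ} (hK : IsCompact K)
    (hXK : ∀ᵐ ω ∂μ, X ω ∈ K) : Integrable (fun ω => f (X ω)) μ := by
  obtain ⟨C, hC⟩ := hK.exists_bound_of_continuousOn hf.continuousOn
  exact Integrable.of_bound (hf.measurable.comp_aemeasurable hX).aestronglyMeasurable C
    (hXK.mono fun ω h => hC _ h)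

end Support

section CondExpPolynomial

variable {Ω : Type*} {m m₀ : MeasurableSpace Ω} {μ : Measure[m₀] Ω} {X Y : Ω → ℝ}

def CondExpMapsDegreeLT (μ : Measure[m₀] Ω) (m : MeasurableSpace Ω) (X Y : Ω → ℝ) (n : ℕ) :
    Prop :=
  ∀ p : ℝ[X], p.degree < n →
    ∃ q : ℝ[X], q.degree < n ∧ μ[fun ω => p.eval (X ω) | m] =ᵐ[μ] fun ω => q.eval (Y ω)

lemma exists_condExp_eval_eq_of_degree_le
    (hint : ∀ p : ℝ[X], Integrable (fun ω => p.eval (X ω)) μ)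
    {n : ℕ} {f : ℝ[X]} (hfd : f.natDegree = n) (hfl : f.leadingCoeff ≠ 0) {G : Ω → ℝ}
    (hf : μ[fun ω => f.eval (X ω) | m] =ᵐ[μ] G) (hlow : CondExpMapsDegreeLT μ m X Y n)
    {p : ℝ[X]} (hp : p.degree ≤ n) :
    ∃ q : ℝ[X], q.degree < n ∧ μ[fun ω => p.eval (X ω) | m]
      =ᵐ[μ] fun ω => p.coeff n / f.leadingCoeff * G ω + q.eval (Y ω) := by
  set a := p.coeff n / f.leadingCoeff
  obtain ⟨q, hq, hrq⟩ := hlow _ (degree_sub_C_mul_lt hp hfd hfl)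
  have hsplit : (fun ω => p.eval (X ω))
      = a • (fun ω => f.eval (X ω)) + fun ω => (p - C a * f).eval (X ω) := by
    funext ω
    simp
  refine ⟨q, hq, ?_⟩
  rw [hsplit]
  filter_upwards [condExp_add ((hint f).smul a) (hint _) m,
    condExp_smul a (fun ω => f.eval (X ω)) m, hf, hrq] with ω hadd hsmul hfω hrω
  rw [hadd, Pi.add_apply, hsmul, Pi.smul_apply, hfω, hrω, smul_eq_mul]

variable [IsFiniteMeasure μ] {φ ψ : ℕ → ℝ[X]} {ρ : ℕ → ℝ}

lemma condExpMapsDegreeLT_of_condExp_eval_eq (hm : m ≤ m₀)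
    (hint : ∀ p : ℝ[X], Integrable (fun ω => p.eval (X ω)) μ)
    (hφd : ∀ n, (φ n).natDegree = n) (hφl : ∀ n, (φ n).leadingCoeff ≠ 0)
    (hψd : ∀ n, (ψ n).natDegree = n)
    (hreg : ∀ n, 1 ≤ n →
      μ[fun ω => (φ n).eval (X ω) | m] =ᵐ[μ] fun ω => ρ n * (ψ n).eval (Y ω))
    {n : ℕ} (hn : 1 ≤ n) : CondExpMapsDegreeLT μ m X Y n := by
  induction n, hn using Nat.le_induction with
  | base =>
    intro p hp
    rw [eq_C_of_degree_le_zero (Order.le_of_lt_succ hp)]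
    refine ⟨C (p.coeff 0), degree_C_le.trans_lt (by norm_num), ?_⟩
    simp only [eval_C]
    rw [condExp_const hm]
  | succ n hn ih =>
    intro p hp
    obtain ⟨q, hq, hpq⟩ := exists_condExp_eval_eq_of_degree_le hint (hφd n) (hφl n)
      (hreg n hn) ih (Order.le_of_lt_succ (by exact_mod_cast hp))
    have hψn : (ψ n).degree ≤ n := degree_le_natDegree.trans (by rw [hψd n])
    refine ⟨(p.coeff n / (φ n).leadingCoeff * ρ n) • ψ n + q, ?_, ?_⟩
    · exact (degree_add_le _ _).trans_lt <| max_lt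
        ((degree_smul_le _ _).trans_lt (hψn.trans_lt (by exact_mod_cast n.lt_succ_self)))
        (hq.trans (by exact_mod_cast n.lt_succ_self))
    · filter_upwards [hpq] with ω hω
      rw [hω, eval_add, eval_smul, smul_eq_mul, mul_assoc]

lemma condExp_pow_eq_leadingCoeff_mul_pow_add (hm : m ≤ m₀)
    (hint : ∀ p : ℝ[X], Integrable (fun ω => p.eval (X ω)) μ)
    (hφd : ∀ n, (φ n).natDegree = n) (hφl : ∀ n, (φ n).leadingCoeff ≠ 0)
    (hψd : ∀ n, (ψ n).natDegree = n)
    (hreg : ∀ n, 1 ≤ n →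
      μ[fun ω => (φ n).eval (X ω) | m] =ᵐ[μ] fun ω => ρ n * (ψ n).eval (Y ω))
    {n : ℕ} (hn : 1 ≤ n) :
    ∃ P : ℝ[X], P.degree < n ∧ μ[fun ω => X ω ^ n | m] =ᵐ[μ]
      fun ω => ρ n * (ψ n).leadingCoeff / (φ n).leadingCoeff * Y ω ^ n + P.eval (Y ω) := by
  obtain ⟨q, hq, hpow⟩ := exists_condExp_eval_eq_of_degree_le (p := Polynomial.X ^ n) hint
    (hφd n) (hφl n) (hreg n hn)
    (condExpMapsDegreeLT_of_condExp_eval_eq hm hint hφd hφl hψd hreg hn) (degree_X_pow_le n)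
  simp only [eval_pow, eval_X, coeff_X_pow_self] at hpow
  have hψ₀ : ψ n ≠ 0 := ne_zero_of_natDegree_gt (n := 0) (by rw [hψd n]; omega)
  have hψ (y : ℝ) : (ψ n).eval y = (ψ n).eraseLead.eval y + (ψ n).leadingCoeff * y ^ n := by
    conv_lhs => rw [← eraseLead_add_C_mul_X_pow (ψ n), hψd n]
    simp only [eval_add, eval_mul, eval_C, eval_pow, eval_X]
  refine ⟨(ρ n / (φ n).leadingCoeff) • (ψ n).eraseLead + q, ?_, ?_⟩
  · refine (degree_add_le _ _).trans_lt (max_lt ?_ hq)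
    exact (degree_smul_le _ _).trans_lt ((degree_eraseLead_lt hψ₀).trans_eq
      (by rw [degree_eq_natDegree hψ₀, hψd n]))
  · filter_upwards [hpow] with ω hω
    rw [hω, hψ, eval_add, eval_smul, smul_eq_mul]
    ring

end CondExpPolynomial

theorem stmt8_general {Ω : Type*} [MeasurableSpace Ω] (μ : Measure Ω) [IsProbabilityMeasure μ]
    (X Y : Ω → ℝ) (hX : Measurable X) (hY : Measurable Y)
    (α₁ ω₁ α₂ ω₂ : ℝ)
    (f₁ f₂ : ℝ → ℝ) (hf₁ : IsDensityOn f₁ α₁ ω₁) (hf₂ : IsDensityOn f₂ α₂ ω₂)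
    (φ ψ : ℕ → Polynomial ℝ)
    (hφ : OrthonormalPolys f₁ φ) (hψ : OrthonormalPolys f₂ ψ)
    (ρ : ℕ → ℝ)
    (hjoint : Measure.map (fun ω => (X ω, Y ω)) μ =
      (volume : Measure (ℝ × ℝ)).withDensity
        (fun p => ENNReal.ofReal (lancaster f₁ f₂ φ ψ ρ p.1 p.2)))
    (hreg : ∀ n : ℕ, 1 ≤ n →
      (μ[(fun ω => (φ n).eval (X ω)) | MeasurableSpace.comap Y inferInstance]
          =ᵐ[μ] fun ω => ρ n * (ψ n).eval (Y ω)) ∧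
      (μ[(fun ω => (ψ n).eval (Y ω)) | MeasurableSpace.comap X inferInstance]
          =ᵐ[μ] fun ω => ρ n * (φ n).eval (X ω))) :
    ∀ n : ℕ, 1 ≤ n →
      (∃ P : Polynomial ℝ, P.degree < n ∧
        μ[(fun ω => X ω ^ n) | MeasurableSpace.comap Y inferInstance]
          =ᵐ[μ] fun ω => (ρ n * (ψ n).leadingCoeff / (φ n).leadingCoeff) * Y ω ^ n
            + P.eval (Y ω)) ∧
      (∃ Q : Polynomial ℝ, Q.degree < n ∧
        μ[(fun ω => Y ω ^ n) | MeasurableSpace.comap X inferInstance]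
          =ᵐ[μ] fun ω => (ρ n * (φ n).leadingCoeff / (ψ n).leadingCoeff) * X ω ^ n
            + Q.eval (X ω)) := by
  have hXY : AEMeasurable (fun ω => (X ω, Y ω)) μ := (hX.prodMk hY).aemeasurable
  have hX_mem : ∀ᵐ ω ∂μ, X ω ∈ Set.Icc α₁ ω₁ :=
    ae_mem_of_map_eq_withDensity hXY hjoint (measurable_fst measurableSet_Icc)
      (s := Prod.fst ⁻¹' Set.Icc α₁ ω₁) fun p hp => by simp [lancaster, hf₁.2.1 p.1 hp]
  have hY_mem : ∀ᵐ ω ∂μ, Y ω ∈ Set.Icc α₂ ω₂ :=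
    ae_mem_of_map_eq_withDensity hXY hjoint (measurable_snd measurableSet_Icc)
      (s := Prod.snd ⁻¹' Set.Icc α₂ ω₂) fun p hp => by simp [lancaster, hf₂.2.1 p.2 hp]
  have hintX (p : ℝ[X]) : Integrable (fun ω => p.eval (X ω)) μ :=
    integrable_comp_of_ae_mem_isCompact hX.aemeasurable p.continuous isCompact_Icc hX_mem
  have hintY (p : ℝ[X]) : Integrable (fun ω => p.eval (Y ω)) μ :=
    integrable_comp_of_ae_mem_isCompact hY.aemeasurable p.continuous isCompact_Icc hY_mem
  intro n hn
  exact ⟨condExp_pow_eq_leadingCoeff_mul_pow_add hY.comap_le hintX hφ.1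
      (fun n => (hφ.2.1 n).ne') hψ.1 (fun n hn => (hreg n hn).1) hn,
    condExp_pow_eq_leadingCoeff_mul_pow_add hX.comap_le hintY hψ.1 (fun n => (hψ.2.1 n).ne')
      hφ.1 (fun n hn => (hreg n hn).2) hn⟩

/-- If `(X,Y)` has the Lancaster density, then for every `n ≥ 1`,
`E(φₙ(X)|Y) = ρₙ ψₙ(Y)` a.s. and `E(ψₙ(Y)|X) = ρₙ φₙ(X)` a.s. -/
theorem stmt8 {Ω : Type*} [MeasurableSpace Ω] (μ : Measure Ω) [IsProbabilityMeasure μ]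
    (X Y : Ω → ℝ) (hX : Measurable X) (hY : Measurable Y)
    (α₁ ω₁ α₂ ω₂ : ℝ) (h₁ : α₁ < ω₁) (h₂ : α₂ < ω₂)
    (f₁ f₂ : ℝ → ℝ) (hf₁ : IsDensityOn f₁ α₁ ω₁) (hf₂ : IsDensityOn f₂ α₂ ω₂)
    (hm₁ : Measurable f₁) (hm₂ : Measurable f₂)
    (φ ψ : ℕ → Polynomial ℝ)
    (hφ : OrthonormalPolys f₁ φ) (hψ : OrthonormalPolys f₂ ψ)
    (c d : ℕ → ℝ)
    (hc : ∀ n, c n = sSup ((fun x => |(φ n).eval x|) '' Set.Icc α₁ ω₁))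
    (hd : ∀ n, d n = sSup ((fun y => |(ψ n).eval y|) '' Set.Icc α₂ ω₂))
    (ρ : ℕ → ℝ)
    (hsum : Summable fun n : ℕ => |ρ (n + 1)| * c (n + 1) * d (n + 1))
    (hρ : ∑' n : ℕ, |ρ (n + 1)| * c (n + 1) * d (n + 1) ≤ 1)
    (hjoint : Measure.map (fun ω => (X ω, Y ω)) μ =
      (volume : Measure (ℝ × ℝ)).withDensity
        (fun p => ENNReal.ofReal (lancaster f₁ f₂ φ ψ ρ p.1 p.2)))
    (hreg : ∀ n : ℕ, 1 ≤ n →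
      (μ[(fun ω => (φ n).eval (X ω)) | MeasurableSpace.comap Y inferInstance]
          =ᵐ[μ] fun ω => ρ n * (ψ n).eval (Y ω)) ∧
      (μ[(fun ω => (ψ n).eval (Y ω)) | MeasurableSpace.comap X inferInstance]
          =ᵐ[μ] fun ω => ρ n * (φ n).eval (X ω))) :
    ∀ n : ℕ, 1 ≤ n →
      (∃ P : Polynomial ℝ, P.degree < n ∧
        μ[(fun ω => X ω ^ n) | MeasurableSpace.comap Y inferInstance]
          =ᵐ[μ] fun ω => (ρ n * (ψ n).leadingCoeff / (φ n).leadingCoeff) * Y ω ^ n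
            + P.eval (Y ω)) ∧
      (∃ Q : Polynomial ℝ, Q.degree < n ∧
        μ[(fun ω => Y ω ^ n) | MeasurableSpace.comap X inferInstance]
          =ᵐ[μ] fun ω => (ρ n * (φ n).leadingCoeff / (ψ n).leadingCoeff) * X ω ^ n
            + Q.eval (X ω)) :=
  stmt8_general μ X Y hX hY α₁ ω₁ α₂ ω₂ f₁ f₂ hf₁ hf₂ φ ψ hφ hψ ρ hjoint hreg
end

section
/- There exists a pair of real random variables (X,Y) such that E(X|Y) = a₁Y + a₀ a.s. and E(Y|X) = b₁X + b₀ a.s. with a₁b₁ ≠ 0, and yet R(X,Y) > |ρ(X,Y)| > 0. In particular, strictly linear regression in both directions does not imply that the maximal correlation equals the absolute Pearson correlation. -/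
open MeasureTheory ProbabilityTheory Real
open scoped ENNReal

/-!
Take `(X, Y)` on `{-1, 0, 1}²` with `P(±1, ±1) = 3/10`, `P(±1, ∓1) = 1/10` and `P(0, 0) = 1/5`.
Given `Y = ±1`, `X` equals `Y` with probability `3/4` and `-Y` with probability `1/4`, and given
`Y = 0` it vanishes; so `E(X|Y) = Y/2`, symmetrically `E(Y|X) = X/2`, and `ρ(X, Y) = 1/2`.
But `X² = Y²` almost surely and `X²` is not constant, so the maximal correlation is `1`.
-/

open scoped RealInnerProductSpace

section Correlation

variable {Ω : Type*} [MeasurableSpace Ω] {μ : Measure Ω}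

lemma covar_eq_covariance (X Y : Ω → ℝ) : covar μ X Y = cov[X, Y; μ] := rfl

lemma covariance_eq_inner_toLp [IsFiniteMeasure μ] {X Y : Ω → ℝ} (hX : MemLp X 2 μ)
    (hY : MemLp Y 2 μ) :
    cov[X, Y; μ] = ⟪(hX.sub (memLp_const μ[X])).toLp, (hY.sub (memLp_const μ[Y])).toLp⟫ := by
  rw [L2.inner_def, covariance]
  refine integral_congr_ae ?_
  filter_upwards [(hX.sub (memLp_const μ[X])).coeFn_toLp,
    (hY.sub (memLp_const μ[Y])).coeFn_toLp] with ω hXω hYω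
  simp [hXω, hYω, mul_comm]

lemma sqrt_variance_eq_norm_toLp [IsFiniteMeasure μ] {X : Ω → ℝ} (hX : MemLp X 2 μ) :
    √Var[X; μ] = ‖(hX.sub (memLp_const μ[X])).toLp‖ := by
  rw [← covariance_self hX.aemeasurable, covariance_eq_inner_toLp hX hX,
    real_inner_self_eq_norm_sq, Real.sqrt_sq (norm_nonneg _)]

lemma abs_covariance_le_sqrt_variance_mul [IsFiniteMeasure μ] {X Y : Ω → ℝ}
    (hX : MemLp X 2 μ) (hY : MemLp Y 2 μ) :
    |cov[X, Y; μ]| ≤ √Var[X; μ] * √Var[Y; μ] := by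
  rw [covariance_eq_inner_toLp hX hY, sqrt_variance_eq_norm_toLp hX,
    sqrt_variance_eq_norm_toLp hY]
  exact abs_real_inner_le_norm _ _

lemma abs_pearson_le_one [IsFiniteMeasure μ] {X Y : Ω → ℝ} (hX : MemLp X 2 μ)
    (hY : MemLp Y 2 μ) : |pearson μ X Y| ≤ 1 := by
  rw [pearson, covar_eq_covariance, abs_div,
    abs_of_nonneg (by positivity : 0 ≤ √Var[X; μ] * √Var[Y; μ])]
  exact div_le_one_of_le₀ (abs_covariance_le_sqrt_variance_mul hX hY) (by positivity)

lemma pearson_congr {X X' Y Y' : Ω → ℝ} (hX : X =ᵐ[μ] X') (hY : Y =ᵐ[μ] Y') :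
    pearson μ X Y = pearson μ X' Y' := by
  simp only [pearson, covar, integral_congr_ae hX, integral_congr_ae hY, variance_congr hX,
    variance_congr hY]
  congr 1
  refine integral_congr_ae ?_
  filter_upwards [hX, hY] with ω hXω hYω
  rw [hXω, hYω]

lemma pearson_self {X : Ω → ℝ} (hX : AEMeasurable X μ) (hvar : Var[X; μ] ≠ 0) :
    pearson μ X X = 1 := by
  rw [pearson, covar_eq_covariance, covariance_self hX,
    Real.mul_self_sqrt (variance_nonneg X μ), div_self hvar]

lemma maxCorr_eq_one_of_comp_ae_eq [IsFiniteMeasure μ] {X Y : Ω → ℝ} {g₁ g₂ : ℝ → ℝ}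
    (hg₁ : Measurable g₁) (hg₂ : Measurable g₂) (hL2 : MemLp (g₁ ∘ X) 2 μ)
    (hvar : 0 < Var[g₁ ∘ X; μ]) (heq : g₁ ∘ X =ᵐ[μ] g₂ ∘ Y) :
    maxCorr μ X Y = 1 := by
  have hone : pearson μ (g₁ ∘ X) (g₂ ∘ Y) = 1 := by
    rw [← pearson_congr Filter.EventuallyEq.rfl heq, pearson_self hL2.aemeasurable hvar.ne']
  rw [maxCorr]
  refine le_antisymm (csSup_le ⟨1, ?one_mem⟩ ?le_one) (le_csSup ⟨1, ?le_one⟩ ?one_mem)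
  case one_mem =>
    exact ⟨g₁, g₂, hg₁, hg₂, hL2, hL2.ae_eq heq, hvar, variance_congr heq ▸ hvar, hone.symm⟩
  case le_one =>
    rintro r ⟨f₁, f₂, -, -, hf₁, hf₂, -, -, rfl⟩
    exact (abs_le.mp (abs_pearson_le_one hf₁ hf₂)).2

lemma condExp_comap_ae_eq_comp [IsFiniteMeasure μ] {X Y : Ω → ℝ} {g : ℝ → ℝ}
    (hY : Measurable Y) (hg : Measurable g) (hX : Integrable X μ) (hgY : Integrable (g ∘ Y) μ)
    (hset : ∀ t, MeasurableSet t → ∫ ω in Y ⁻¹' t, g (Y ω) ∂μ = ∫ ω in Y ⁻¹' t, X ω ∂μ) :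
    μ[X | MeasurableSpace.comap Y inferInstance] =ᵐ[μ] g ∘ Y :=
  (ae_eq_condExp_of_forall_setIntegral_eq hY.comap_le hX (fun _ _ _ => hgY.integrableOn)
    (by rintro s ⟨t, ht, rfl⟩ -; exact hset t ht)
    (hg.comp (comap_measurable Y)).aestronglyMeasurable).symm

end Correlation

lemma integrable_smul_dirac {α : Type*} [MeasurableSpace α] [MeasurableSingletonClass α]
    {c : ℝ≥0∞} (hc : c ≠ ∞) (a : α) (f : α → ℝ) : Integrable f (c • .dirac a) :=
  (integrable_dirac enorm_lt_top).smul_measure hc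

noncomputable def jointLaw : Measure (ℝ × ℝ) :=
  (3/10 : ℝ≥0∞) • .dirac (1, 1) + (3/10 : ℝ≥0∞) • .dirac (-1, -1)
    + (1/10 : ℝ≥0∞) • .dirac (1, -1) + (1/10 : ℝ≥0∞) • .dirac (-1, 1)
    + (1/5 : ℝ≥0∞) • .dirac (0, 0)

instance : IsProbabilityMeasure jointLaw := by
  constructor
  rw [← ENNReal.toReal_eq_one_iff]
  simp [jointLaw, ENNReal.toReal_add, ENNReal.div_eq_top, ENNReal.toReal_div]
  norm_num

lemma integrable_jointLaw (f : ℝ × ℝ → ℝ) : Integrable f jointLaw := by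
  simp [jointLaw, integrable_smul_dirac, ENNReal.div_eq_top]

lemma memLp_two_jointLaw {f : ℝ × ℝ → ℝ} (hf : Measurable f) : MemLp f 2 jointLaw :=
  (memLp_two_iff_integrable_sq hf.aestronglyMeasurable).2 (integrable_jointLaw _)

lemma integral_jointLaw (f : ℝ × ℝ → ℝ) :
    ∫ p, f p ∂jointLaw = 3/10 * f (1, 1) + 3/10 * f (-1, -1) + 1/10 * f (1, -1)
      + 1/10 * f (-1, 1) + 1/5 * f (0, 0) := by
  simp [jointLaw, integral_add_measure, integrable_smul_dirac, integral_smul_measure,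
    ENNReal.div_eq_top, ENNReal.toReal_div]

lemma setIntegral_jointLaw (f : ℝ × ℝ → ℝ) {s : Set (ℝ × ℝ)} (hs : MeasurableSet s) :
    ∫ p in s, f p ∂jointLaw = 3/10 * s.indicator f (1, 1) + 3/10 * s.indicator f (-1, -1)
      + 1/10 * s.indicator f (1, -1) + 1/10 * s.indicator f (-1, 1)
      + 1/5 * s.indicator f (0, 0) := by
  rw [← integral_indicator hs, integral_jointLaw]

lemma condExp_fst_jointLaw :
    jointLaw[Prod.fst | MeasurableSpace.comap Prod.snd inferInstance]
      =ᵐ[jointLaw] fun p => 1/2 * p.2 := by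
  refine condExp_comap_ae_eq_comp measurable_snd (measurable_const_mul _)
    (integrable_jointLaw _) (integrable_jointLaw _) fun t ht => ?_
  rw [setIntegral_jointLaw _ (measurable_snd ht), setIntegral_jointLaw _ (measurable_snd ht)]
  by_cases h₁ : (1 : ℝ) ∈ t <;> by_cases h₂ : (-1 : ℝ) ∈ t <;>
    simp [Set.indicator, h₁, h₂] <;> norm_num

lemma condExp_snd_jointLaw :
    jointLaw[Prod.snd | MeasurableSpace.comap Prod.fst inferInstance]
      =ᵐ[jointLaw] fun p => 1/2 * p.1 := by
  refine condExp_comap_ae_eq_comp measurable_fst (measurable_const_mul _)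
    (integrable_jointLaw _) (integrable_jointLaw _) fun t ht => ?_
  rw [setIntegral_jointLaw _ (measurable_fst ht), setIntegral_jointLaw _ (measurable_fst ht)]
  by_cases h₁ : (1 : ℝ) ∈ t <;> by_cases h₂ : (-1 : ℝ) ∈ t <;>
    simp [Set.indicator, h₁, h₂] <;> norm_num

lemma pearson_fst_snd_jointLaw : pearson jointLaw Prod.fst Prod.snd = 1/2 := by
  have hvar_fst : Var[Prod.fst; jointLaw] = 4/5 := by
    rw [variance_eq_integral measurable_fst.aemeasurable, integral_jointLaw, integral_jointLaw]
    norm_num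
  have hvar_snd : Var[Prod.snd; jointLaw] = 4/5 := by
    rw [variance_eq_integral measurable_snd.aemeasurable, integral_jointLaw, integral_jointLaw]
    norm_num
  have hcovar : covar jointLaw Prod.fst Prod.snd = 2/5 := by
    rw [covar, integral_jointLaw, integral_jointLaw, integral_jointLaw]
    norm_num
  rw [pearson, hcovar, hvar_fst, hvar_snd, Real.mul_self_sqrt (by norm_num)]
  norm_num

lemma maxCorr_fst_snd_jointLaw : maxCorr jointLaw Prod.fst Prod.snd = 1 := by
  refine maxCorr_eq_one_of_comp_ae_eq (g₁ := (· ^ 2)) (g₂ := (· ^ 2)) (measurable_id.pow_const 2)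
    (measurable_id.pow_const 2) (memLp_two_jointLaw (measurable_fst.pow_const 2)) ?_ ?_
  · rw [Function.comp_def, variance_eq_integral (measurable_fst.pow_const 2).aemeasurable,
      integral_jointLaw, integral_jointLaw]
    norm_num
  · simp [jointLaw, Filter.EventuallyEq, ae_dirac_eq]

/-- There exists a pair `(X,Y)` of real random variables with strictly linear regressions
on each other (`a₁ b₁ ≠ 0`), yet `R(X,Y) > |ρ(X,Y)| > 0`: strictly linear regression in
both directions does not imply that the maximal correlation equals the absolute Pearson
correlation. -/
theorem stmt11 :
    ∃ (μ : Measure (ℝ × ℝ)) (_ : IsProbabilityMeasure μ) (a₁ a₀ b₁ b₀ : ℝ),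
      a₁ * b₁ ≠ 0 ∧
      (μ[(fun p => p.1) | MeasurableSpace.comap (fun p : ℝ × ℝ => p.2) inferInstance]
          =ᵐ[μ] fun p => a₁ * p.2 + a₀) ∧
      (μ[(fun p => p.2) | MeasurableSpace.comap (fun p : ℝ × ℝ => p.1) inferInstance]
          =ᵐ[μ] fun p => b₁ * p.1 + b₀) ∧
      |pearson μ (fun p => p.1) (fun p => p.2)| <
        maxCorr μ (fun p => p.1) (fun p => p.2) ∧
      0 < |pearson μ (fun p => p.1) (fun p => p.2)| := by
  refine ⟨jointLaw, inferInstance, 1/2, 0, 1/2, 0, by norm_num, ?_, ?_, ?_, ?_⟩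
  · simpa only [add_zero] using condExp_fst_jointLaw
  · simpa only [add_zero] using condExp_snd_jointLaw
  · rw [pearson_fst_snd_jointLaw, maxCorr_fst_snd_jointLaw]
    norm_num
  · rw [pearson_fst_snd_jointLaw]
    norm_num
end
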